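/- Let N'' ≥ 1 and consider the state |φ⟩ = (1/N'') Σ_{i=0}^{N''-1} [ |i⟩ Σ_{j=0}^{min(2i, N''−1)} |j⟩ |0⟩ + |N''−1−i⟩ Σ_{j=min(N'', 2i+1)}^{N''-1} |j⟩ |1⟩ ]. For each n with 0 ≤ n ≤ N''−1, the squared norm of the projection of |φ⟩ onto |n⟩⟨n| ⊗ I ⊗ I equals (2n+1)/(N'')². -/

import Mathlib

/-!
The coordinate of `φ` at `(a, b, c)` is `1 / N''` when `c = 0` and `b ≤ 2a`, or when `c = 1` and
`2N'' ≤ 2a + b + 1` (the `|1⟩` branch reaches row `a` from `i = N'' - 1 - a`), and `0` otherwise.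
Row `n` therefore has `min (2n + 1) N''` nonzero entries of the first kind and
`2n + 1 - min (2n + 1) N''` of the second, `2n + 1` in all, each of squared modulus `1 / N''²`.
-/

open Finset

theorem EuclideanSpace.sum_attach_single_apply {𝕜 α γ : Type*} [RCLike 𝕜] [DecidableEq α]
    [DecidableEq γ] {N : ℕ} {s : Finset ℕ} (k : s → Fin N) (hk : ∀ j, (k j : ℕ) = j) (i a : α)
    (c c' : γ) (b : Fin N) :
    (∑ j ∈ s.attach, EuclideanSpace.single (i, k j, c) (1 : 𝕜)) (a, b, c')
      = if a = i ∧ (b : ℕ) ∈ s ∧ c' = c then 1 else 0 := by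
  simp only [WithLp.ofLp_sum, Finset.sum_apply, PiLp.single_apply, Prod.mk.injEq, Fin.ext_iff, hk]
  rw [Finset.sum_attach s (fun j => if a = i ∧ (b : ℕ) = j ∧ c' = c then (1 : 𝕜) else 0)]
  by_cases h : a = i ∧ c' = c
  · simp [h]
  · rw [Finset.sum_eq_zero fun j _ => if_neg (by tauto), if_neg (by tauto)]

theorem EuclideanSpace.norm_sq_toLp_ite_fst {𝕜 α β : Type*} [RCLike 𝕜] [Fintype α] [Fintype β]
    [DecidableEq α] (f : EuclideanSpace 𝕜 (α × β)) (a : α) :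
    ‖(WithLp.toLp 2 (fun p => if p.1 = a then f p else 0) : EuclideanSpace 𝕜 (α × β))‖ ^ 2
      = ∑ b, ‖f (a, b)‖ ^ 2 := by
  rw [EuclideanSpace.norm_sq_eq, Fintype.sum_prod_type]
  simp [apply_ite]

theorem card_filter_range_le_add_card_filter_range {N n : ℕ} (hn : n < N) :
    #{b ∈ range N | b ≤ 2 * n} + #{b ∈ range N | 2 * N ≤ 2 * n + b + 1} = 2 * n + 1 := by
  have h₁ : {b ∈ range N | b ≤ 2 * n} = range (min (2 * n + 1) N) := by
    ext b; simp only [mem_filter, mem_range]; omega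
  have h₂ : {b ∈ range N | 2 * N ≤ 2 * n + b + 1} = Ico (2 * N - 2 * n - 1) N := by
    ext b; simp only [mem_filter, mem_range, mem_Ico]; omega
  rw [h₁, h₂, card_range, Nat.card_Ico]
  omega

noncomputable def phiState (N : ℕ) : EuclideanSpace ℂ (Fin N × Fin N × Fin 2) :=
  (1 / (N : ℝ)) •
    ∑ i : Fin N,
      ((∑ j ∈ (range (min (2 * (i : ℕ) + 1) N)).attach,
          EuclideanSpace.single
            (i, (⟨(j : ℕ), (mem_range.mp j.2).trans_le (min_le_right _ _)⟩ : Fin N), (0 : Fin 2)) (1 : ℂ))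
       + (∑ j ∈ (Ico (min N (2 * (i : ℕ) + 1)) N).attach,
          EuclideanSpace.single
            ((⟨N - 1 - (i : ℕ), Nat.sub_one_sub_lt i.isLt⟩ : Fin N),
              (⟨(j : ℕ), (mem_Ico.mp j.2).2⟩ : Fin N), (1 : Fin 2)) (1 : ℂ)))

theorem phiState_apply (N : ℕ) (a b : Fin N) (c : Fin 2) :
    phiState N (a, b, c) = ((1 / N : ℝ) : ℂ) *
      if (c = 0 ∧ (b : ℕ) ≤ 2 * a) ∨ (c = 1 ∧ 2 * N ≤ 2 * a + b + 1) then 1 else 0 := by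
  have hrev (i : Fin N) : a = ⟨N - 1 - (i : ℕ), by omega⟩ ↔ a.rev = i := by
    simp only [Fin.ext_iff, Fin.val_rev]; omega
  rw [phiState, PiLp.smul_apply, WithLp.ofLp_sum, Finset.sum_apply]
  simp only [PiLp.add_apply, EuclideanSpace.sum_attach_single_apply, implies_true, hrev,
    ite_and, sum_add_distrib, sum_ite_eq, mem_univ, if_true, Complex.real_smul]
  congr 1
  have ha := a.isLt
  have hb := b.isLt
  simp only [mem_range, mem_Ico]
  split_ifs <;> simp_all <;> omega

theorem norm_sq_proj_phiState (N : ℕ) (n : Fin N) :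
    ‖(WithLp.toLp 2 (fun p => if p.1 = n then phiState N p else 0) :
        EuclideanSpace ℂ (Fin N × Fin N × Fin 2))‖ ^ 2 = (2 * (n : ℝ) + 1) / (N : ℝ) ^ 2 := by
  have hrow (b : Fin N) : ∑ c : Fin 2, ‖phiState N (n, b, c)‖ ^ 2 = (1 / (N : ℝ)) ^ 2 *
      ((if (b : ℕ) ≤ 2 * n then 1 else 0) + if 2 * N ≤ 2 * n + b + 1 then 1 else 0) := by
    simp only [Fin.sum_univ_two, phiState_apply, one_div, Complex.ofReal_inv, Complex.ofReal_natCast,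
      mul_ite, mul_one, mul_zero, true_and, zero_ne_one, false_and, or_false, one_ne_zero, false_or]
    split_ifs <;> simp [← two_mul, mul_comm]
  rw [EuclideanSpace.norm_sq_toLp_ite_fst, Fintype.sum_prod_type]
  simp only [hrow]
  rw [← mul_sum, sum_add_distrib,
    Fin.sum_univ_eq_sum_range (fun b => if b ≤ 2 * (n : ℕ) then (1 : ℝ) else 0),
    Fin.sum_univ_eq_sum_range (fun b => if 2 * N ≤ 2 * (n : ℕ) + b + 1 then (1 : ℝ) else 0),
    sum_boole, sum_boole, ← Nat.cast_add, card_filter_range_le_add_card_filter_range n.isLt]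
  push_cast
  ring

/-- for the state φ = (1/N'') Σ_i [ |i⟩ Σ_{j=0}^{min(2i,N''−1)} |j⟩|0⟩
+ |N''−1−i⟩ Σ_{j=min(N'',2i+1)}^{N''−1} |j⟩|1⟩ ] in ℂ^{N''} ⊗ ℂ^{N''} ⊗ ℂ², the squared norm
of the projection onto |n⟩⟨n| ⊗ I ⊗ I equals (2n+1)/(N'')². -/
theorem stmt_7 (N'' : ℕ)
    (φ : EuclideanSpace ℂ (Fin N'' × Fin N'' × Fin 2))
    (hφ : φ = (1 / (N'' : ℝ)) •
      ∑ i : Fin N'',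
        ((∑ j ∈ (Finset.range (min (2 * (i : ℕ) + 1) N'')).attach,
            EuclideanSpace.single
              (i, (⟨(j : ℕ), by have := Finset.mem_range.mp j.2; omega⟩ : Fin N''),
                (0 : Fin 2)) (1 : ℂ))
         + (∑ j ∈ (Finset.Ico (min N'' (2 * (i : ℕ) + 1)) N'').attach,
            EuclideanSpace.single
              ((⟨N'' - 1 - (i : ℕ), by omega⟩ : Fin N''),
                (⟨(j : ℕ), by have := (Finset.mem_Ico.mp j.2).2; omega⟩ : Fin N''),
                (1 : Fin 2)) (1 : ℂ)))) :
    ∀ n : Fin N'',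
      ‖(show EuclideanSpace ℂ (Fin N'' × Fin N'' × Fin 2) from
          WithLp.toLp 2 (fun p => if p.1 = n then φ p else 0))‖ ^ 2
        = (2 * (n : ℝ) + 1) / (N'' : ℝ) ^ 2 := by
  intro n
  subst hφ
  exact norm_sq_proj_phiState N'' n
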